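/- arXiv:1707.02066 — 5 statements merged into one kernel-verified Lean document; each statement's English description precedes it below -/
import Mathlib

section
/- Let G be a finite group, I a set, H_i ≤ G subgroups and ρ_i : H_i → G injective group homomorphisms, and let Γ be the associated group HNN-extension ⟨G, t_i (i ∈ I) | relations of G, h t_i = t_i ρ_i(h) for all h ∈ H_i⟩. Then Γ is a Zappa–Szép product of a free group and G: there exist a set X and a group homomorphism j : FG(X) → Γ such that the map FG(X) × G → Γ, (w, g) ↦ j(w)·[g], is a bijection. -/
/-!
Write `q̂` for the chosen representative `q.out` of a coset `q`. Since `G` is finite, `Hᵢ` and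
`ρᵢ(Hᵢ)` have the same index, so there are bijections `eᵢ : G ⧸ Hᵢ ≃ G ⧸ ρᵢ(Hᵢ)`. Take
`X = Σ i, G ⧸ Hᵢ` and send the basis element `(i, q)` to `[q̂] tᵢ [(eᵢ q)^]⁻¹`.

`Γ` acts on the right on `FG(X) × G`: `[g]` multiplies the second factor by `g`, and `tᵢ` sends
`(w, q̂ h)` (with `h ∈ Hᵢ`) to `(w (i, q), (eᵢ q)^ ρᵢ(h))`, a bijection because `eᵢ` is one and
`ρᵢ` is injective, and the relations `h tᵢ = tᵢ ρᵢ(h)` hold. The map `(w, g) ↦ j(w) [g]` is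
equivariant and `(1, 1) · j(w) [g] = (w, g)`, so `γ ↦ (1, 1) · γ` is its inverse.
-/

universe u v

/-- The relators of the group HNN-extension
`⟨G, tᵢ (i ∈ I) | relations of G, h tᵢ = tᵢ ρᵢ(h) for h ∈ Hᵢ⟩`,
as elements of the free group on the generating set `G ⊕ I`. -/
def grpHNNRels (G : Type u) [Group G] {I : Type v} (H : I → Subgroup G)
    (ρ : ∀ i, H i →* G) : Set (FreeGroup (G ⊕ I)) :=
  {w | (∃ g h : G, w = FreeGroup.of (Sum.inl g) * FreeGroup.of (Sum.inl h) *
          (FreeGroup.of (Sum.inl (g * h)))⁻¹) ∨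
       w = FreeGroup.of (Sum.inl (1 : G)) ∨
       (∃ (i : I) (h : H i), w = FreeGroup.of (Sum.inl (h : G)) * FreeGroup.of (Sum.inr i) *
          (FreeGroup.of (Sum.inl (ρ i h)))⁻¹ * (FreeGroup.of (Sum.inr i))⁻¹)}

namespace Subgroup

variable {G : Type*} [Group G] (K : Subgroup G)

noncomputable def equivQuotientProd : G ≃ (G ⧸ K) × K where
  toFun g := (g, ⟨(g : G ⧸ K).out⁻¹ * g, QuotientGroup.leftRel_apply.mp (Quotient.mk_out' g)⟩)
  invFun p := p.1.out * p.2
  left_inv g := by simp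
  right_inv := by
    rintro ⟨q, k⟩
    have hq : ((q.out * k : G) : G ⧸ K) = q := by
      rw [QuotientGroup.mk_mul_of_mem _ k.2, QuotientGroup.out_eq']
    ext <;> simp [hq]

variable {K}

theorem equivQuotientProd_symm_apply (p : (G ⧸ K) × K) :
    K.equivQuotientProd.symm p = p.1.out * p.2 := rfl

theorem equivQuotientProd_apply_mul (g : G) (k : K) :
    K.equivQuotientProd (g * k) = ((K.equivQuotientProd g).1, (K.equivQuotientProd g).2 * k) := by
  have hq : ((g * k : G) : G ⧸ K) = g := QuotientGroup.mk_mul_of_mem _ k.2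
  ext <;> simp [equivQuotientProd, hq, mul_assoc]

theorem equivQuotientProd_out (q : G ⧸ K) : K.equivQuotientProd q.out = (q, 1) :=
  K.equivQuotientProd.eq_symm_apply.mp (mul_one _).symm

theorem nonempty_quotient_equiv_quotient_range [Finite G]
    {K : Subgroup G} {f : K →* G} (hf : Function.Injective f) :
    Nonempty (G ⧸ K ≃ G ⧸ f.range) := by
  have hcard : Nat.card f.range = Nat.card K :=
    Nat.card_congr (MonoidHom.ofInjective hf).toEquiv.symm
  have hindex : K.index = f.range.index := by
    have hK := K.card_mul_index
    rw [← f.range.card_mul_index, ← hcard] at hK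
    exact Nat.eq_of_mul_eq_mul_left Nat.card_pos hK
  exact Finite.card_eq.mp hindex

end Subgroup

abbrev GrpHNN (G : Type u) [Group G] {I : Type v} (H : I → Subgroup G) (ρ : ∀ i, H i →* G) :=
  PresentedGroup (grpHNNRels G H ρ)

noncomputable section

namespace GrpHNN

open Equiv

variable {G : Type u} [Group G] {I : Type v} {H : I → Subgroup G} {ρ : ∀ i, H i →* G}

def of : G →* GrpHNN G H ρ where
  toFun g := PresentedGroup.of (Sum.inl g)
  map_one' := PresentedGroup.one_of_mem (Or.inr (Or.inl rfl))
  map_mul' g h := (PresentedGroup.mk_eq_mk_of_mul_inv_mem (Or.inl ⟨g, h, rfl⟩)).symm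

theorem of_apply (g : G) : (of g : GrpHNN G H ρ) = PresentedGroup.of (Sum.inl g) := rfl

variable (H ρ) in
def t (i : I) : GrpHNN G H ρ := PresentedGroup.of (Sum.inr i)

theorem of_mul_t (i : I) (h : H i) : of (h : G) * t H ρ i = t H ρ i * of (ρ i h) :=
  eq_mul_of_mul_inv_eq (PresentedGroup.mk_eq_mk_of_mul_inv_mem (Or.inr (Or.inr ⟨i, h, rfl⟩)))

variable (e : ∀ i, G ⧸ H i ≃ G ⧸ (ρ i).range)

def freeGen (i : I) (q : G ⧸ H i) : GrpHNN G H ρ := of q.out * t H ρ i * of (e i q).out⁻¹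

def freeHom : FreeGroup (Σ i, G ⧸ H i) →* GrpHNN G H ρ :=
  FreeGroup.lift fun x => freeGen e x.1 x.2

variable (hinj : ∀ i, Function.Injective (ρ i))

def cosetShift (i : I) : G ≃ G :=
  ((H i).equivQuotientProd.trans ((e i).prodCongr (MonoidHom.ofInjective (hinj i)).toEquiv)).trans
    (ρ i).range.equivQuotientProd.symm

theorem cosetShift_apply (i : I) (g : G) :
    cosetShift e hinj i g = (e i g).out * ρ i ((H i).equivQuotientProd g).2 := rfl

theorem cosetShift_mul (i : I) (g : G) (h : H i) :
    cosetShift e hinj i (g * h) = cosetShift e hinj i g * ρ i h := by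
  simp [cosetShift_apply, Subgroup.equivQuotientProd_apply_mul, mul_assoc]

theorem cosetShift_out (i : I) (q : G ⧸ H i) : cosetShift e hinj i q.out = (e i q).out := by
  simp [cosetShift, Subgroup.equivQuotientProd_out, Subgroup.equivQuotientProd_symm_apply]

def rightMulPerm (g : G) : Perm (FreeGroup (Σ i, G ⧸ H i) × G) :=
  (Equiv.refl _).prodCongr (Equiv.mulRight g)

def stablePerm (i : I) : Perm (FreeGroup (Σ i, G ⧸ H i) × G) where
  toFun p := (p.1 * FreeGroup.of ⟨i, p.2⟩, cosetShift e hinj i p.2)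
  invFun p := (p.1 * (FreeGroup.of ⟨i, (cosetShift e hinj i).symm p.2⟩)⁻¹,
    (cosetShift e hinj i).symm p.2)
  left_inv p := by simp
  right_inv p := by simp

theorem stablePerm_mul_rightMulPerm (i : I) (h : H i) :
    stablePerm e hinj i * rightMulPerm (h : G) = rightMulPerm (ρ i h) * stablePerm e hinj i := by
  ext ⟨w, g⟩ <;> simp [stablePerm, rightMulPerm, cosetShift_mul, QuotientGroup.mk_mul_of_mem _ h.2]

theorem lift_rels_eq_one : ∀ r ∈ grpHNNRels G H ρ,
    FreeGroup.lift (Sum.elim (fun g => MulOpposite.op (rightMulPerm g))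
      fun i => MulOpposite.op (stablePerm e hinj i)) r = 1 := by
  rintro r (⟨g, h, rfl⟩ | rfl | ⟨i, h, rfl⟩)
  all_goals
    simp only [map_mul, map_inv, FreeGroup.lift_apply_of, Sum.elim_inl, Sum.elim_inr,
      ← MulOpposite.op_inv, ← MulOpposite.op_mul, MulOpposite.op_eq_one_iff]
  · rw [inv_mul_eq_one]
    ext ⟨w, x⟩ <;> simp [rightMulPerm, mul_assoc]
  · ext ⟨w, x⟩ <;> simp [rightMulPerm]
  · rw [inv_mul_eq_one, stablePerm_mul_rightMulPerm, inv_mul_cancel_left]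

def act (γ : GrpHNN G H ρ) : Perm (FreeGroup (Σ i, G ⧸ H i) × G) :=
  (PresentedGroup.toGroup (lift_rels_eq_one e hinj) γ).unop

theorem act_mul (a b : GrpHNN G H ρ) : act e hinj (a * b) = act e hinj b * act e hinj a := by
  simp [act]

theorem act_inv (a : GrpHNN G H ρ) : act e hinj a⁻¹ = (act e hinj a)⁻¹ := by
  simp [act]

theorem act_of (g : G) : act e hinj (of g) = rightMulPerm g := by
  simp [act, of_apply, PresentedGroup.toGroup.of]

theorem act_t (i : I) : act e hinj (t H ρ i) = stablePerm e hinj i := by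
  simp [act, t]

def mulMap (p : FreeGroup (Σ i, G ⧸ H i) × G) : GrpHNN G H ρ := freeHom e p.1 * of p.2

theorem freeGen_mul_of_cosetShift (i : I) (g : G) :
    freeGen e i g * of (cosetShift e hinj i g) = of g * t H ρ i := by
  set h := ((H i).equivQuotientProd g).2
  calc freeGen e i g * of (cosetShift e hinj i g)
      = of (g : G ⧸ H i).out * (t H ρ i * of (ρ i h)) := by
        simp only [freeGen, cosetShift_apply, map_mul, map_inv]
        group
        rfl
    _ = of (g : G ⧸ H i).out * (of (h : G) * t H ρ i) := by rw [of_mul_t]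
    _ = of g * t H ρ i := by
        rw [← mul_assoc, ← map_mul]
        exact congrArg (of · * t H ρ i) ((H i).equivQuotientProd.symm_apply_apply g)

theorem mulMap_act (γ : GrpHNN G H ρ) (p : FreeGroup (Σ i, G ⧸ H i) × G) :
    mulMap e (act e hinj γ p) = mulMap e p * γ := by
  have hγ : γ ∈ Subgroup.closure (Set.range PresentedGroup.of) := by simp
  induction hγ using Subgroup.closure_induction generalizing p with
  | mem γ hγ =>
    obtain ⟨w, g⟩ := p
    obtain ⟨g' | i, rfl⟩ := hγ
    · rw [← of_apply, act_of]
      simp [mulMap, rightMulPerm, mul_assoc]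
    · change mulMap e (act e hinj (t H ρ i) (w, g)) = _
      rw [act_t]
      simp only [mulMap, stablePerm, Equiv.coe_fn_mk, map_mul, freeHom, FreeGroup.lift_apply_of]
      rw [mul_assoc, freeGen_mul_of_cosetShift, mul_assoc]
      rfl
  | one => simp [act]
  | mul a b _ _ iha ihb => rw [act_mul, Perm.mul_apply, ihb, iha, mul_assoc]
  | inv a _ iha =>
    rw [eq_mul_inv_iff_mul_eq, ← iha, act_inv, Perm.inv_def, Equiv.apply_symm_apply]

theorem act_freeHom (w v : FreeGroup (Σ i, G ⧸ H i)) :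
    act e hinj (freeHom e w) (v, 1) = (v * w, 1) := by
  induction w using FreeGroup.induction_on generalizing v with
  | C1 => simp [act]
  | of x =>
    rw [freeHom, FreeGroup.lift_apply_of, freeGen, act_mul, act_mul, Perm.mul_apply,
      Perm.mul_apply, act_of, act_t, act_of]
    simp [rightMulPerm, stablePerm, cosetShift_out]
  | inv_of x ih =>
    rw [map_inv, act_inv, Perm.inv_eq_iff_eq, ih, inv_mul_cancel_right]
  | mul w₁ w₂ ih₁ ih₂ => rw [map_mul, act_mul, Perm.mul_apply, ih₁, ih₂, mul_assoc]

theorem mulMap_bijective (hinj : ∀ i, Function.Injective (ρ i)) :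
    Function.Bijective (mulMap e) := by
  refine Function.bijective_iff_has_inverse.mpr ⟨fun γ => act e hinj γ (1, 1), ?_, ?_⟩
  · rintro ⟨w, g⟩
    simp [mulMap, act_mul, act_freeHom, act_of, rightMulPerm]
  · intro γ
    rw [mulMap_act]
    simp [mulMap]

end GrpHNN

end

/-- a group HNN-extension `Γ` of a finite group `G` is a Zappa–Szép product
of a free group and `G`: there are a set `X` and a homomorphism `j : FG(X) → Γ` such that
`(w, g) ↦ j(w)·[g]` is a bijection `FG(X) × G → Γ`. -/
theorem stmt15 (G : Type u) [Group G] [Finite G] {I : Type v} (H : I → Subgroup G)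
    (ρ : ∀ i, H i →* G) (hinj : ∀ i, Function.Injective (ρ i)) :
    ∃ (X : Type (max u v)) (j : FreeGroup X →* PresentedGroup (grpHNNRels G H ρ)),
      Function.Bijective fun p : FreeGroup X × G =>
        j p.1 * PresentedGroup.of (Sum.inl p.2) := by
  have e i : G ⧸ H i ≃ G ⧸ (ρ i).range :=
    (Subgroup.nonempty_quotient_equiv_quotient_range (hinj i)).some
  exact ⟨Σ i, G ⧸ H i, GrpHNN.freeHom e, GrpHNN.mulMap_bijective e hinj⟩
end

section
/- Let k ≥ 1 and let D be a compact subset of ℝ^k with dim_H(D) > k − 1. Then the monoid M(D) of similarity transformations of D is right cancellative: if a, b, c : D → D are similarity transformations with a ∘ c = b ∘ c, then a = b. -/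
open scoped ENNReal

/-!
If `a ∘ c = b ∘ c`, then `a` and `b` have the same ratio `r` and agree on `T = a(c(D))`, so for
every `x` and every `q = a(c z) ∈ T` we get `|q - a x| = r |c z - x| = |q - b x|`: the points
`a x` and `b x` are equidistant from all of `T`. As `a ∘ c` is a similarity,
`dim_H T = dim_H D > k - 1`, so `T` does not fit in a hyperplane; in particular it does not lie in
the perpendicular bisector of `a x` and `b x`, forcing `a x = b x`.
-/

open Set Module AffineSubspace

section Hyperplane

variable {E : Type*} [NormedAddCommGroup E] [InnerProductSpace ℝ E] [FiniteDimensional ℝ E]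

theorem finrank_direction_perpBisector {x y : E} (hxy : x ≠ y) :
    finrank ℝ (perpBisector x y).direction = finrank ℝ E - 1 := by
  have hspan := finrank_span_singleton (K := ℝ) (vsub_ne_zero.2 hxy.symm)
  have hsum := (ℝ ∙ (y -ᵥ x)).finrank_add_finrank_orthogonal
  rw [direction_perpBisector]
  omega

theorem dimH_perpBisector {x y : E} (hxy : x ≠ y) :
    dimH (perpBisector x y : Set E) = (finrank ℝ E : ℝ≥0∞) - 1 := by
  rw [Real.Convex.dimH_eq_finrank_vectorSpan (perpBisector x y).convex perpBisector_nonempty,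
    ← direction_eq_vectorSpan, finrank_direction_perpBisector hxy, ENNReal.natCast_sub,
    Nat.cast_one]

theorem eq_of_forall_dist_eq_of_lt_dimH {S : Set E} (hS : (finrank ℝ E : ℝ≥0∞) - 1 < dimH S)
    {x y : E} (h : ∀ q ∈ S, dist q x = dist q y) : x = y := by
  by_contra hxy
  have hsub : S ⊆ perpBisector x y := fun q hq => mem_perpBisector_iff_dist_eq.2 (h q hq)
  exact (dimH_mono hsub).not_gt (dimH_perpBisector hxy ▸ hS)

end Hyperplane

theorem nontrivial_of_dimH_univ_pos {X : Type*} [EMetricSpace X] (h : 0 < dimH (univ : Set X)) :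
    Nontrivial X := by
  by_contra hX
  rw [not_nontrivial_iff_subsingleton, ← subsingleton_univ_iff] at hX
  exact h.ne' hX.dimH_zero

namespace Dilation

theorem dimH_image {X Y : Type*} [EMetricSpace X] [EMetricSpace Y] (f : X →ᵈ Y) (s : Set X) :
    dimH (f '' s) = dimH s :=
  le_antisymm ((Dilation.lipschitz f).dimH_image_le s)
    ((Dilation.antilipschitz f).le_dimH_image s)

theorem ratio_eq_of_comp_eq {X Y Z : Type*} [MetricSpace X] [Nontrivial X]
    [PseudoEMetricSpace Y] [PseudoEMetricSpace Z] {f g : Y →ᵈ Z} {h : X →ᵈ Y}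
    (hfg : f.comp h = g.comp h) : ratio f = ratio g := by
  have hratio := congrArg ratio hfg
  rw [ratio_comp, ratio_comp] at hratio
  exact mul_right_cancel₀ (ratio_ne_zero h) hratio

theorem cancel_right_of_lt_dimH {X Y E : Type*} [MetricSpace X] [MetricSpace Y]
    [NormedAddCommGroup E] [InnerProductSpace ℝ E] [FiniteDimensional ℝ E]
    {f g : Y →ᵈ E} {h : X →ᵈ Y}
    (hX : (finrank ℝ E : ℝ≥0∞) - 1 < dimH (univ : Set X))
    (hfg : f.comp h = g.comp h) : f = g := by
  have : Nontrivial X := nontrivial_of_dimH_univ_pos (zero_le.trans_lt hX)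
  have hr := ratio_eq_of_comp_eq hfg
  have hdim : (finrank ℝ E : ℝ≥0∞) - 1 < dimH (range (f.comp h)) := by
    rwa [← image_univ, dimH_image]
  ext y
  refine eq_of_forall_dist_eq_of_lt_dimH hdim ?_
  rintro _ ⟨z, rfl⟩
  calc dist (f (h z)) (f y) = ratio f * dist (h z) y := dist_eq f _ _
    _ = dist (g (h z)) (g y) := by rw [hr, dist_eq g]
    _ = dist (f (h z)) (g y) := by rw [← comp_apply, ← hfg, comp_apply]

def ofDistEqMul {X Y : Type*} [PseudoMetricSpace X] [PseudoMetricSpace Y] (f : X → Y) {r : ℝ}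
    (hr : 0 < r) (hf : ∀ x y, dist (f x) (f y) = r * dist x y) : X →ᵈ Y :=
  mkOfDistEq f ⟨⟨r, hr.le⟩, fun h => hr.ne' (congrArg NNReal.toReal h), hf⟩

end Dilation

theorem dimH_univ_subtype {X : Type*} [EMetricSpace X] (D : Set X) :
    dimH (univ : Set D) = dimH D := by
  rw [← isometry_subtype_coe.dimH_image, image_univ, Subtype.range_coe]

theorem stmt16_general (k : ℕ) (D : Set (EuclideanSpace ℝ (Fin k)))
    (hdim : (k : ℝ≥0∞) - 1 < dimH D)
    (a b c : D → D)
    (ha : ∃ r : ℝ, 0 < r ∧ r ≤ 1 ∧ ∀ x y : D, dist (a x) (a y) = r * dist x y)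
    (hb : ∃ r : ℝ, 0 < r ∧ r ≤ 1 ∧ ∀ x y : D, dist (b x) (b y) = r * dist x y)
    (hc : ∃ r : ℝ, 0 < r ∧ r ≤ 1 ∧ ∀ x y : D, dist (c x) (c y) = r * dist x y)
    (h : a ∘ c = b ∘ c) : a = b := by
  obtain ⟨ra, hra, -, ha⟩ := ha
  obtain ⟨rb, hrb, -, hb⟩ := hb
  obtain ⟨rc, hrc, -, hc⟩ := hc
  let ι : D →ᵈ EuclideanSpace ℝ (Fin k) := isometry_subtype_coe.toDilation
  let A := ι.comp (Dilation.ofDistEqMul a hra ha)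
  let B := ι.comp (Dilation.ofDistEqMul b hrb hb)
  have hAB : A = B := by
    refine Dilation.cancel_right_of_lt_dimH (h := Dilation.ofDistEqMul c hrc hc) ?_ ?_
    · rwa [finrank_euclideanSpace_fin, dimH_univ_subtype]
    · exact Dilation.ext fun z => congrArg Subtype.val (congrFun h z)
  funext x
  exact Subtype.ext (DFunLike.congr_fun hAB x)

/-- if `D ⊆ ℝ^k` is compact with Hausdorff dimension `> k - 1`, then the
monoid of similarity transformations of `D` is right cancellative: if `a`, `b`, `c` are
similarity transformations of `D` with `a ∘ c = b ∘ c`, then `a = b`. -/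
theorem stmt16 (k : ℕ) (hk : 1 ≤ k) (D : Set (EuclideanSpace ℝ (Fin k)))
    (hD : IsCompact D) (hdim : (k : ℝ≥0∞) - 1 < dimH D)
    (a b c : D → D)
    (ha : ∃ r : ℝ, 0 < r ∧ r ≤ 1 ∧ ∀ x y : D, dist (a x) (a y) = r * dist x y)
    (hb : ∃ r : ℝ, 0 < r ∧ r ≤ 1 ∧ ∀ x y : D, dist (b x) (b y) = r * dist x y)
    (hc : ∃ r : ℝ, 0 < r ∧ r ≤ 1 ∧ ∀ x y : D, dist (c x) (c y) = r * dist x y)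
    (h : a ∘ c = b ∘ c) : a = b :=
  stmt16_general k D hdim a b c ha hb hc h
end

section
/- Let k ≥ 1, let F be a nonempty compact subset of ℝ^k, and let f₁, …, f_n : F → F (n ≥ 1) be similarity contractions with F = f₁(F) ∪ ⋯ ∪ f_n(F). Put d = dim_H(F) and μ = H^d, and assume: d > k − 1; 0 < μ(F) < ∞; (i) μ(f_i(F) ∩ f_j(F)) = 0 for all i ≠ j; and (ii) there is no similarity contraction h of F with f_i(F) ⊊ h(F) for some i. Then f₁, …, f_n generate a free monoid of transformations of F: whenever f_{i₁} ∘ ⋯ ∘ f_{i_r} = f_{j₁} ∘ ⋯ ∘ f_{j_s} as maps F → F, one has r = s and i_t = j_t for all t. -/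
open MeasureTheory Function Set
open scoped ENNReal

/-!
A word `i₁ ⋯ i_r` acts on `F` by a similarity, so its image has positive `H^d`-measure.
If two different words give the same map, cancel their common prefix (each `fᵢ` is injective).
If what remains of both words is nonempty, the image of the composite lies in
`fᵢ(F) ∩ fⱼ(F)` for some `i ≠ j`, which is `H^d`-null. If one of them is empty, some `fⱼ` is
surjective onto `F`, impossible since `H^d(fⱼ(F)) = cⱼ^d H^d(F) < H^d(F)`.
-/

section Similarity

variable {X Y : Type*} [MetricSpace X] [MetricSpace Y]

def IsSimilarity (g : X → Y) : Prop :=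
  ∃ c : ℝ, 0 < c ∧ ∀ x y, dist (g x) (g y) = c * dist x y

theorem isSimilarity_id : IsSimilarity (id : X → X) :=
  ⟨1, one_pos, fun _ _ => (one_mul _).symm⟩

theorem IsSimilarity.comp {Z : Type*} [MetricSpace Z] {g : Y → Z} {h : X → Y}
    (hg : IsSimilarity g) (hh : IsSimilarity h) : IsSimilarity (g ∘ h) := by
  obtain ⟨a, ha, hga⟩ := hg
  obtain ⟨b, hb, hhb⟩ := hh
  exact ⟨a * b, mul_pos ha hb, fun x y => by simp only [comp_apply, hga, hhb, mul_assoc]⟩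

theorem IsSimilarity.injective {g : X → Y} (hg : IsSimilarity g) : Injective g := by
  obtain ⟨c, hc, hgc⟩ := hg
  intro x y hxy
  simpa [hxy, hc.ne'] using hgc x y

variable [MeasurableSpace X] [BorelSpace X] [MeasurableSpace Y] [BorelSpace Y]

theorem hausdorffMeasure_image_of_dist_eq_mul {g : X → Y} {c : ℝ} (hc : 0 < c)
    (hg : ∀ x y, dist (g x) (g y) = c * dist x y) {d : ℝ} (hd : 0 ≤ d) (s : Set X) :
    μH[d] (g '' s) = ENNReal.ofReal c ^ d * μH[d] s := by
  have hlip : LipschitzWith c.toNNReal g :=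
    LipschitzWith.of_dist_le_mul fun x y => by rw [hg, Real.coe_toNNReal _ hc.le]
  have hanti : AntilipschitzWith c.toNNReal⁻¹ g :=
    AntilipschitzWith.of_le_mul_dist fun x y => by
      rw [hg, NNReal.coe_inv, Real.coe_toNNReal _ hc.le, inv_mul_cancel_left₀ hc.ne']
  have hc0 : ENNReal.ofReal c ≠ 0 := by positivity
  refine le_antisymm (hlip.hausdorffMeasure_image_le hd s) ?_
  calc ENNReal.ofReal c ^ d * μH[d] s
      ≤ ENNReal.ofReal c ^ d * ((ENNReal.ofReal c)⁻¹ ^ d * μH[d] (g '' s)) := by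
        gcongr
        have := hanti.le_hausdorffMeasure_image hd s
        rwa [ENNReal.coe_inv (Real.toNNReal_pos.2 hc).ne'] at this
    _ = μH[d] (g '' s) := by
        rw [← mul_assoc, ← ENNReal.mul_rpow_of_nonneg _ _ hd,
          ENNReal.mul_inv_cancel hc0 ENNReal.ofReal_ne_top, ENNReal.one_rpow, one_mul]

theorem IsSimilarity.hausdorffMeasure_range_pos {g : X → Y} (hg : IsSimilarity g) {d : ℝ}
    (hd : 0 ≤ d) (hX : 0 < μH[d] (univ : Set X)) : 0 < μH[d] (range g) := by
  obtain ⟨c, hc, hgc⟩ := hg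
  rw [← image_univ, hausdorffMeasure_image_of_dist_eq_mul hc hgc hd]
  exact ENNReal.mul_pos (ENNReal.rpow_pos (by positivity) ENNReal.ofReal_ne_top).ne' hX.ne'

theorem not_surjective_of_dist_eq_mul {g : X → X} {c : ℝ} (hc : 0 < c) (hc1 : c < 1)
    (hg : ∀ x y, dist (g x) (g y) = c * dist x y) {d : ℝ} (hd : 0 < d)
    (hX : 0 < μH[d] (univ : Set X)) (hX' : μH[d] (univ : Set X) < ⊤) : ¬ Surjective g := by
  intro hsurj
  have hcd : ENNReal.ofReal c ^ d < 1 :=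
    ENNReal.rpow_lt_one (by simpa using hc1) hd
  have hlt : ENNReal.ofReal c ^ d * μH[d] (univ : Set X) < μH[d] (univ : Set X) := by
    simpa [mul_comm] using ENNReal.mul_lt_mul_right hX.ne' hX'.ne hcd
  rw [← hausdorffMeasure_image_of_dist_eq_mul hc hg hd.le, image_univ, hsurj.range_eq] at hlt
  exact hlt.false

end Similarity

section Words

variable {ι α : Type*}

def wordMap (f : ι → α → α) (L : List ι) : α → α :=
  L.foldr (fun i g => f i ∘ g) id

variable {f : ι → α → α}

@[simp]
theorem wordMap_nil : wordMap f [] = id := rfl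

@[simp]
theorem wordMap_cons (i : ι) (L : List ι) : wordMap f (i :: L) = f i ∘ wordMap f L := rfl

theorem IsSimilarity.wordMap [MetricSpace α] (hf : ∀ i, IsSimilarity (f i)) (L : List ι) :
    IsSimilarity (wordMap f L) := by
  induction L with
  | nil => exact isSimilarity_id
  | cons i L ih => exact (hf i).comp ih

theorem wordMap_injective (hinj : ∀ i, Injective (f i)) (hsurj : ∀ i, ¬ Surjective (f i))
    (hsep : ∀ i j, i ≠ j → ∀ L, ¬ range (wordMap f (i :: L)) ⊆ range (f j)) :
    Injective (wordMap f) := by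
  have hne_id : ∀ i L, wordMap f (i :: L) ≠ id := fun i L h =>
    hsurj i fun x => ⟨wordMap f L x, congrFun h x⟩
  intro L M hLM
  induction L generalizing M with
  | nil =>
    cases M with
    | nil => rfl
    | cons j M => exact absurd hLM.symm (hne_id j M)
  | cons i L ih =>
    cases M with
    | nil => exact absurd hLM (hne_id i L)
    | cons j M =>
      obtain rfl | hij := eq_or_ne i j
      · rw [ih ((hinj i).comp_left hLM)]
      · refine absurd ?_ (hsep i j hij L)
        rw [hLM, wordMap_cons]
        exact range_comp_subset_range _ _

end Words

theorem stmt17_general (k n : ℕ) (hk : 1 ≤ k)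
    (F : Set (EuclideanSpace ℝ (Fin k)))
    (f : Fin n → F → F)
    (hf : ∀ i, ∃ c : ℝ, 0 < c ∧ c < 1 ∧ ∀ x y : F, dist (f i x) (f i y) = c * dist x y)
    (d : ℝ) (hdk : (k : ℝ) - 1 < d)
    (hμpos : 0 < μH[d] F) (hμfin : μH[d] F < ⊤)
    (hsep : ∀ i j, i ≠ j →
      μH[d] ((Subtype.val '' Set.range (f i)) ∩ (Subtype.val '' Set.range (f j))) = 0) :
    Function.Injective fun L : List (Fin n) => L.foldr (fun i g => f i ∘ g) id := by
  have hd : 0 < d := lt_of_le_of_lt (by simpa using hk) hdk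
  have hval (s : Set F) : μH[d] (Subtype.val '' s) = μH[d] s :=
    isometry_subtype_coe.hausdorffMeasure_image (Or.inl hd.le) s
  have hFpos : 0 < μH[d] (univ : Set F) := by rwa [← hval, Subtype.coe_image_univ]
  have hFfin : μH[d] (univ : Set F) < ⊤ := by rwa [← hval, Subtype.coe_image_univ]
  have hsim (i : Fin n) : IsSimilarity (f i) :=
    let ⟨c, hc, _, hfc⟩ := hf i; ⟨c, hc, hfc⟩
  refine wordMap_injective (fun i => (hsim i).injective) (fun i => ?_) fun i j hij L hsub => ?_
  · obtain ⟨c, hc, hc1, hfc⟩ := hf i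
    exact not_surjective_of_dist_eq_mul hc hc1 hfc hd hFpos hFfin
  · have hnull : μH[d] (range (f i) ∩ range (f j)) = 0 := by
      rw [← hval, image_inter Subtype.val_injective, hsep i j hij]
    refine ((IsSimilarity.wordMap hsim (i :: L)).hausdorffMeasure_range_pos hd.le hFpos).ne' ?_
    exact measure_mono_null (subset_inter (range_comp_subset_range (wordMap f L) (f i)) hsub) hnull

/-- an iterated function system `f₁, …, f_n` of similarity contractions of a
nonempty compact `F ⊆ ℝ^k` with `F = ⋃ fᵢ(F)`, `d = dim_H F > k - 1`, `0 < H^d(F) < ∞`,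
measure-disjoint pieces, and no piece properly contained in the image of a similarity
contraction, generates a free monoid of transformations of `F`. -/
theorem stmt17 (k n : ℕ) (hk : 1 ≤ k) (hn : 1 ≤ n)
    (F : Set (EuclideanSpace ℝ (Fin k))) (hFne : F.Nonempty) (hFc : IsCompact F)
    (f : Fin n → F → F)
    (hf : ∀ i, ∃ c : ℝ, 0 < c ∧ c < 1 ∧ ∀ x y : F, dist (f i x) (f i y) = c * dist x y)
    (hcover : ∀ y : F, ∃ i x, f i x = y)
    (d : ℝ) (hd : ENNReal.ofReal d = dimH F) (hdk : (k : ℝ) - 1 < d)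
    (hμpos : 0 < μH[d] F) (hμfin : μH[d] F < ⊤)
    (hsep : ∀ i j, i ≠ j →
      μH[d] ((Subtype.val '' Set.range (f i)) ∩ (Subtype.val '' Set.range (f j))) = 0)
    (hmax : ∀ h : F → F,
      (∃ c : ℝ, 0 < c ∧ c < 1 ∧ ∀ x y : F, dist (h x) (h y) = c * dist x y) →
      ∀ i, ¬ (Subtype.val '' Set.range (f i) ⊂ Subtype.val '' Set.range h)) :
    Function.Injective fun L : List (Fin n) => L.foldr (fun i g => f i ∘ g) id :=
  stmt17_general k n hk F f hf d hdk hμpos hμfin hsep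
end

section
/- Let C be a left Rees category and let a be an identity (object) of C. Then the local monoid aCa is a left Rees monoid. -/
open CategoryTheory

universe u

/-- The principal right ideal `aM` of a monoid. -/
def prIdeal {M : Type*} [Monoid M] (a : M) : Set M := Set.range fun m => a * m

/-- A left Rees monoid: a left cancellative, right rigid monoid in which every principal
right ideal is contained in only finitely many distinct principal right ideals. -/
def IsLeftReesMonoid (M : Type*) [Monoid M] : Prop :=
  (∀ a b c : M, a * b = a * c → b = c) ∧
  (∀ a b : M, (prIdeal a ∩ prIdeal b).Nonempty →
    prIdeal a ⊆ prIdeal b ∨ prIdeal b ⊆ prIdeal a) ∧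
  (∀ a : M, {S : Set M | (∃ b : M, S = prIdeal b) ∧ prIdeal a ⊆ S}.Finite)

/-- The principal right ideal `xC` of an arrow `x : d ⟶ r` of a category (arrows composed
like functions, so `x ∘ c = c ≫ x`), as a set of arrows of `C`. -/
def prIdealCat {C : Type u} [SmallCategory C] {d r : C} (x : d ⟶ r) :
    Set (Σ (a : C) (b : C), a ⟶ b) :=
  {y | ∃ (e : C) (c : e ⟶ d), y = ⟨e, r, c ≫ x⟩}


section Aux
variable {C : Type u} [SmallCategory C] {a : C}

lemma prIdealCat_sub_of_fac (x y : End a) (c : a ⟶ a)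
    (h : (x : a ⟶ a) = c ≫ (y : a ⟶ a)) :
    prIdealCat (x : a ⟶ a) ⊆ prIdealCat (y : a ⟶ a) := by
  rintro z ⟨e, f, rfl⟩
  exact ⟨e, f ≫ c, by simp [h]⟩

lemma fac_of_prIdealCat_sub (x y : End a)
    (h : prIdealCat (x : a ⟶ a) ⊆ prIdealCat (y : a ⟶ a)) :
    ∃ c : a ⟶ a, (x : a ⟶ a) = c ≫ y := by
  have hx : (⟨a, a, x⟩ : Σ (a : C) (b : C), a ⟶ b) ∈ prIdealCat (x : a ⟶ a) :=
    ⟨a, 𝟙 a, by simp⟩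
  obtain ⟨e, c, hc⟩ := h hx
  obtain ⟨rfl, h2⟩ := Sigma.mk.inj_iff.mp hc
  have h2' := h2.eq
  obtain ⟨-, h3⟩ := Sigma.mk.inj_iff.mp h2'
  exact ⟨c, h3.eq⟩

lemma prIdeal_sub_of_fac (x y : End a) (c : a ⟶ a) (h : (x : a ⟶ a) = c ≫ y) :
    prIdeal x ⊆ prIdeal y := by
  rintro z ⟨m, rfl⟩
  exact ⟨(show End a from c) * m, by simp [End.mul_def, h]⟩

lemma fac_of_prIdeal_sub (x y : End a) (h : prIdeal x ⊆ prIdeal y) :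
    ∃ c : a ⟶ a, (x : a ⟶ a) = c ≫ y := by
  obtain ⟨m, hm⟩ := h ⟨1, (mul_one x)⟩
  exact ⟨m, by simpa [End.mul_def] using hm.symm⟩

lemma prIdeal_sub_iff (x y : End a) :
    prIdeal x ⊆ prIdeal y ↔ prIdealCat (x : a ⟶ a) ⊆ prIdealCat (y : a ⟶ a) := by
  constructor
  · intro h
    obtain ⟨c, hc⟩ := fac_of_prIdeal_sub x y h
    exact prIdealCat_sub_of_fac _ _ c hc
  · intro h
    obtain ⟨c, hc⟩ := fac_of_prIdealCat_sub x y h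
    exact prIdeal_sub_of_fac _ _ c hc

lemma key_union (u : End a) :
    {z : Σ (a : C) (b : C), a ⟶ b | ∃ s ∈ prIdeal u, z ∈ prIdealCat (s : a ⟶ a)}
      = prIdealCat (u : a ⟶ a) := by
  ext z
  constructor
  · rintro ⟨s, ⟨m, rfl⟩, e, c, rfl⟩
    refine ⟨e, c ≫ ((m : a ⟶ a)), ?_⟩
    show _ = (⟨e, a, (c ≫ m) ≫ u⟩ : Σ (a : C) (b : C), a ⟶ b)
    simp [End.mul_def]
  · intro hz
    exact ⟨u, ⟨1, mul_one u⟩, hz⟩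

end Aux

/-- if `C` is a left Rees category (left cancellative, right rigid, each
principal right ideal contained in only finitely many principal right ideals), then for
every object `a` of `C` the local monoid `aCa` is a left Rees monoid. -/
theorem stmt18 (C : Type u) [SmallCategory C]
    (hlc : ∀ {a b c : C} (x : b ⟶ c) (y z : a ⟶ b), y ≫ x = z ≫ x → y = z)
    (hrigid : ∀ {a b a' b' : C} (x : a ⟶ b) (y : a' ⟶ b'),
      (prIdealCat x ∩ prIdealCat y).Nonempty →
        prIdealCat x ⊆ prIdealCat y ∨ prIdealCat y ⊆ prIdealCat x)
    (hfin : ∀ {a b : C} (x : a ⟶ b),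
      {S : Set (Σ (a : C) (b : C), a ⟶ b) |
        (∃ (a' : C) (b' : C) (y : a' ⟶ b'), S = prIdealCat y) ∧ prIdealCat x ⊆ S}.Finite)
    (a : C) : IsLeftReesMonoid (End a) := by
  refine ⟨?_, ?_, ?_⟩
  · intro x y z h
    have : (y : a ⟶ a) ≫ x = (z : a ⟶ a) ≫ x := by
      simpa [End.mul_def] using h
    exact hlc x y z this
  · intro x y ⟨w, ⟨m, hm⟩, ⟨n, hn⟩⟩
    have hne : (prIdealCat (x : a ⟶ a) ∩ prIdealCat (y : a ⟶ a)).Nonempty := by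
      refine ⟨⟨a, a, w⟩, ⟨a, m, ?_⟩, ⟨a, n, ?_⟩⟩
      · show _ = (⟨a, a, m ≫ x⟩ : Σ (a : C) (b : C), a ⟶ b)
        rw [← hm]; simp [End.mul_def]
      · show _ = (⟨a, a, n ≫ y⟩ : Σ (a : C) (b : C), a ⟶ b)
        rw [← hn]; simp [End.mul_def]
    rcases hrigid (x : a ⟶ a) (y : a ⟶ a) hne with h | h
    · exact Or.inl ((prIdeal_sub_iff x y).mpr h)
    · exact Or.inr ((prIdeal_sub_iff y x).mpr h)
  · intro x
    have hfin' := hfin (x : a ⟶ a)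
    refine Set.Finite.of_finite_image (f := fun S =>
      {z : Σ (a : C) (b : C), a ⟶ b | ∃ s ∈ S, z ∈ prIdealCat (s : a ⟶ a)}) ?_ ?_
    · refine hfin'.subset ?_
      rintro T ⟨S, ⟨⟨b, rfl⟩, hsub⟩, rfl⟩
      dsimp only
      rw [key_union b]
      exact ⟨⟨a, a, b, rfl⟩, (prIdeal_sub_iff x b).mp hsub⟩
    · rintro S ⟨⟨b, rfl⟩, hb⟩ T ⟨⟨b', rfl⟩, hb'⟩ hST
      dsimp only at hST
      rw [key_union b, key_union b'] at hST
      exact le_antisymm ((prIdeal_sub_iff b b').mpr hST.le)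
        ((prIdeal_sub_iff b' b).mpr hST.ge)
end

section
/- Let S be an orthogonally complete inverse semigroup with zero, and let e₁, e₂, f₁, f₂ be idempotents of S such that e₁ ⊥ e₂, f₁ ⊥ f₂, e₁ is D-related to f₁ and e₂ is D-related to f₂. Then e₁ ∨ e₂ is D-related to f₁ ∨ f₂. -/
universe u

section
variable {S : Type u} [Semigroup S] (inv : S → S)

lemma aux_ctx2 (a : S) (h : a * a = a) (y : S) : a * (a * y) = a * y := by
  rw [← mul_assoc, h]

lemma aux_ctx3 {a b : S} (h : a * b * a = a) (y : S) : a * (b * (a * y)) = a * y := by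
  rw [← mul_assoc, ← mul_assoc, h]

lemma aux_invinv
    (hinv : ∀ s : S, s * inv s * s = s ∧ inv s * s * inv s = inv s)
    (huniq : ∀ s t : S, s * t * s = s → t * s * t = t → t = inv s) (s : S) :
    inv (inv s) = s :=
  (huniq (inv s) s (hinv s).2 (hinv s).1).symm

lemma aux_invidem
    (huniq : ∀ s t : S, s * t * s = s → t * s * t = t → t = inv s)
    {e : S} (he : e * e = e) : inv e = e :=
  (huniq e e (by rw [he, he]) (by rw [he, he])).symm

lemma aux_idemmul
    (hinv : ∀ s : S, s * inv s * s = s ∧ inv s * s * inv s = inv s)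
    (huniq : ∀ s t : S, s * t * s = s → t * s * t = t → t = inv s)
    {e f : S} (he : e * e = e) (hf : f * f = f) : (e * f) * (e * f) = e * f := by
  set x := inv (e * f) with hx
  have h1 : (e * f) * x * (e * f) = e * f := (hinv (e * f)).1
  have h2 : x * (e * f) * x = x := (hinv (e * f)).2
  have h2c : ∀ y, x * (e * (f * (x * y))) = x * y := fun y => by
    have := aux_ctx3 h2 y
    simpa [mul_assoc] using this
  have hA : (e * f) * (f * x * e) * (e * f) = e * f := by
    simp only [mul_assoc] at h1 ⊢
    rw [aux_ctx2 f hf, aux_ctx2 e he, h1]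
  have hB : (f * x * e) * (e * f) * (f * x * e) = f * x * e := by
    simp only [mul_assoc]
    rw [aux_ctx2 e he, aux_ctx2 f hf, h2c e]
  have hfxe : f * x * e = x := huniq (e * f) (f * x * e) hA hB
  have hxx : x * x = x := by
    calc x * x = (f * x * e) * (f * x * e) := by rw [hfxe]
      _ = f * (x * e) := by simp only [mul_assoc]; rw [h2c e]
      _ = x := by rw [← mul_assoc, hfxe]
  have hix : inv x = x := aux_invidem inv huniq hxx
  have : e * f = x := by
    rw [← aux_invinv inv hinv huniq (e * f), ← hx, hix]
  rw [this, hxx]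

lemma aux_comm
    (hinv : ∀ s : S, s * inv s * s = s ∧ inv s * s * inv s = inv s)
    (huniq : ∀ s t : S, s * t * s = s → t * s * t = t → t = inv s)
    {e f : S} (he : e * e = e) (hf : f * f = f) : e * f = f * e := by
  have hef := aux_idemmul inv hinv huniq he hf
  have hfe := aux_idemmul inv hinv huniq hf he
  have hefn : e * (f * (e * f)) = e * f := by simpa [mul_assoc] using hef
  have hfen : f * (e * (f * e)) = f * e := by simpa [mul_assoc] using hfe
  have g1 : (e * f) * (f * e) * (e * f) = e * f := by
    simp only [mul_assoc]
    rw [aux_ctx2 f hf, aux_ctx2 e he, hefn]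
  have g2 : (f * e) * (e * f) * (f * e) = f * e := by
    simp only [mul_assoc]
    rw [aux_ctx2 e he, aux_ctx2 f hf, hfen]
  have := huniq (e * f) (f * e) g1 g2
  rw [this, aux_invidem inv huniq hef]

lemma aux_invmul
    (hinv : ∀ s : S, s * inv s * s = s ∧ inv s * s * inv s = inv s)
    (huniq : ∀ s t : S, s * t * s = s → t * s * t = t → t = inv s)
    (a b : S) : inv (a * b) = inv b * inv a := by
  have hE : (b * inv b) * (b * inv b) = b * inv b := by
    simp only [mul_assoc]
    rw [show inv b * (b * inv b) = inv b from by simpa [mul_assoc] using (hinv b).2]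
  have hF : (inv a * a) * (inv a * a) = inv a * a := by
    simp only [mul_assoc]
    rw [show a * (inv a * a) = a from by simpa [mul_assoc] using (hinv a).1]
  have hcomm : (b * inv b) * (inv a * a) = (inv a * a) * (b * inv b) :=
    aux_comm inv hinv huniq hE hF
  have hb1 : b * inv b * b = b := (hinv b).1
  have ha1 : a * inv a * a = a := (hinv a).1
  have hb2 : inv b * b * inv b = inv b := (hinv b).2
  have ha2 : inv a * a * inv a = inv a := (hinv a).2
  have g1 : (a * b) * (inv b * inv a) * (a * b) = a * b := by
    calc (a * b) * (inv b * inv a) * (a * b)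
        = a * ((b * inv b) * ((inv a * a) * b)) := by simp only [mul_assoc]
      _ = a * ((inv a * a) * ((b * inv b) * b)) := by
          rw [← mul_assoc (b * inv b), hcomm, mul_assoc]
      _ = a * b := by
          rw [hb1, ← mul_assoc, show a * (inv a * a) = a from by simpa [mul_assoc] using ha1]
  have g2 : (inv b * inv a) * (a * b) * (inv b * inv a) = inv b * inv a := by
    calc (inv b * inv a) * (a * b) * (inv b * inv a)
        = inv b * ((inv a * a) * ((b * inv b) * inv a)) := by simp only [mul_assoc]
      _ = inv b * ((b * inv b) * ((inv a * a) * inv a)) := by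
          rw [← mul_assoc (inv a * a), ← hcomm, mul_assoc]
      _ = inv b * inv a := by
          rw [ha2, ← mul_assoc, show inv b * (b * inv b) = inv b from by simpa [mul_assoc] using hb2]
  exact (huniq (a * b) (inv b * inv a) g1 g2).symm

lemma aux_antisymm
    (hinv : ∀ s : S, s * inv s * s = s ∧ inv s * s * inv s = inv s)
    (huniq : ∀ s t : S, s * t * s = s → t * s * t = t → t = inv s)
    {x y : S} (hxy : x = y * (inv x * x)) (hyx : y = x * (inv y * y)) : x = y := by
  have hFx : (inv x * x) * (inv x * x) = inv x * x := by
    simp only [mul_assoc]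
    rw [show x * (inv x * x) = x from by simpa [mul_assoc] using (hinv x).1]
  have hFy : (inv y * y) * (inv y * y) = inv y * y := by
    simp only [mul_assoc]
    rw [show y * (inv y * y) = y from by simpa [mul_assoc] using (hinv y).1]
  have hcomm : (inv y * y) * (inv x * x) = (inv x * x) * (inv y * y) :=
    aux_comm inv hinv huniq hFy hFx
  calc x = y * (inv x * x) := hxy
    _ = (x * (inv y * y)) * (inv x * x) := by rw [← hyx]
    _ = x * ((inv x * x) * (inv y * y)) := by rw [mul_assoc, hcomm]
    _ = (x * (inv x * x)) * (inv y * y) := by rw [← mul_assoc]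
    _ = x * (inv y * y) := by
        rw [show x * (inv x * x) = x from by simpa [mul_assoc] using (hinv x).1]
    _ = y := hyx.symm

end

/-- let `S` be an orthogonally complete inverse semigroup with zero (a
semigroup with an inverse operation `inv` giving unique generalized inverses, a zero `z`,
natural partial order `le`, orthogonality relation `orth`, and joins of orthogonal pairs
over which multiplication distributes).  If idempotents satisfy `e₁ ⊥ e₂`, `f₁ ⊥ f₂`,
`e₁ D f₁` and `e₂ D f₂`, then `e₁ ∨ e₂ D f₁ ∨ f₂`. -/
theorem stmt19 (S : Type u) [Semigroup S] (inv : S → S) (z : S)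
    -- `z` is a zero:
    (hz : ∀ s : S, z * s = z ∧ s * z = z)
    -- `inv s` is an inverse of `s`:
    (hinv : ∀ s : S, s * inv s * s = s ∧ inv s * s * inv s = inv s)
    -- inverses are unique:
    (huniq : ∀ s t : S, s * t * s = s → t * s * t = t → t = inv s)
    -- `le` is the natural partial order `s ≤ t ↔ s = t s⁻¹ s`:
    (le : S → S → Prop) (hle : ∀ s t : S, le s t ↔ s = t * (inv s * s))
    -- `orth` is orthogonality: `s ⊥ t ↔ s t⁻¹ = 0 ∧ s⁻¹ t = 0`:
    (orth : S → S → Prop) (horth : ∀ s t : S, orth s t ↔ s * inv t = z ∧ inv s * t = z)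
    -- orthogonal pairs have least upper bounds:
    (join : ∀ s t : S, orth s t → S)
    (hlub : ∀ (s t : S) (h : orth s t),
      le s (join s t h) ∧ le t (join s t h) ∧
        ∀ w : S, le s w → le t w → le (join s t h) w)
    -- multiplication distributes over orthogonal joins:
    (hdistl : ∀ (u s t : S) (h : orth s t),
      le (u * s) (u * join s t h) ∧ le (u * t) (u * join s t h) ∧
        ∀ w : S, le (u * s) w → le (u * t) w → le (u * join s t h) w)
    (hdistr : ∀ (u s t : S) (h : orth s t),
      le (s * u) (join s t h * u) ∧ le (t * u) (join s t h * u) ∧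
        ∀ w : S, le (s * u) w → le (t * u) w → le (join s t h * u) w)
    -- the idempotents:
    (e₁ e₂ f₁ f₂ : S)
    (he₁ : e₁ * e₁ = e₁) (he₂ : e₂ * e₂ = e₂)
    (hf₁ : f₁ * f₁ = f₁) (hf₂ : f₂ * f₂ = f₂)
    (hee : orth e₁ e₂) (hff : orth f₁ f₂)
    (hD₁ : ∃ s : S, s * inv s = e₁ ∧ inv s * s = f₁)
    (hD₂ : ∃ s : S, s * inv s = e₂ ∧ inv s * s = f₂) :
    ∃ s : S, s * inv s = join e₁ e₂ hee ∧ inv s * s = join f₁ f₂ hff := by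
  obtain ⟨s, hs1, hs2⟩ := hD₁
  obtain ⟨t, ht1, ht2⟩ := hD₂
  -- basic consequences
  have he12 : e₁ * e₂ = z := by
    have := ((horth e₁ e₂).1 hee).2
    rwa [aux_invidem inv huniq he₁] at this
  have hf12 : f₁ * f₂ = z := by
    have := ((horth f₁ f₂).1 hff).1
    rwa [aux_invidem inv huniq hf₂] at this
  -- s and t are orthogonal
  have hst : orth s t := by
    rw [horth]
    constructor
    · calc s * inv t = (s * (inv s * s)) * ((inv t * t) * inv t) := by
            rw [show s * (inv s * s) = s from by simpa [mul_assoc] using (hinv s).1,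
              (hinv t).2]
        _ = s * ((inv s * s) * (inv t * t)) * inv t := by simp only [mul_assoc]
        _ = s * (f₁ * f₂) * inv t := by rw [hs2, ht2]
        _ = z := by rw [hf12, (hz s).2, (hz (inv t)).1]
    · calc inv s * t = (inv s * (s * inv s)) * ((t * inv t) * t) := by
            rw [show inv s * (s * inv s) = inv s from by simpa [mul_assoc] using (hinv s).2,
              (hinv t).1]
        _ = inv s * ((s * inv s) * (t * inv t)) * t := by simp only [mul_assoc]
        _ = inv s * (e₁ * e₂) * t := by rw [hs1, ht1]
        _ = z := by rw [he12, (hz (inv s)).2, (hz t).1]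
  set j := join s t hst with hj
  obtain ⟨hsj, htj, _⟩ := hlub s t hst
  -- s ≤ j, t ≤ j in equational form
  have hsJ : s = j * f₁ := by rw [← hs2]; exact (hle s j).1 hsj
  have htJ : t = j * f₂ := by rw [← ht2]; exact (hle t j).1 htj
  have hinvs : inv s = f₁ * inv j := by
    rw [hsJ, aux_invmul inv hinv huniq, aux_invidem inv huniq hf₁]
  have hinvt : inv t = f₂ * inv j := by
    rw [htJ, aux_invmul inv hinv huniq, aux_invidem inv huniq hf₂]
  -- key products with j
  have hGj : (inv j * j) * (inv j * j) = inv j * j := by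
    simp only [mul_assoc]
    rw [show j * (inv j * j) = j from by simpa [mul_assoc] using (hinv j).1]
  have key : ∀ a b fa : S, fa * fa = fa → a = j * fa → inv a = fa * inv j →
      a * inv a = b → inv a * a = fa → a * inv j = b ∧ inv j * a = fa := by
    intro a b fa hfa haJ hia hab ha2
    have hcomm : fa * (inv j * j) = (inv j * j) * fa :=
      aux_comm inv hinv huniq hfa hGj
    constructor
    · have h2 : b = j * (fa * inv j) := by
        calc b = a * inv a := hab.symm
          _ = (j * fa) * (fa * inv j) := by rw [← haJ, ← hia]
          _ = j * (fa * (fa * inv j)) := by simp only [mul_assoc]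
          _ = j * (fa * inv j) := by rw [aux_ctx2 fa hfa]
      rw [haJ, mul_assoc, ← h2]
    · have step : fa = (inv j * j) * fa := by
        calc fa = inv a * a := ha2.symm
          _ = (fa * inv j) * (j * fa) := by rw [← hia, ← haJ]
          _ = fa * ((inv j * j) * fa) := by simp only [mul_assoc]
          _ = fa * (fa * (inv j * j)) := by rw [← hcomm]
          _ = fa * (inv j * j) := by rw [aux_ctx2 fa hfa]
          _ = (inv j * j) * fa := hcomm
      calc inv j * a = inv j * (j * fa) := by rw [← haJ]
        _ = (inv j * j) * fa := by rw [← mul_assoc]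
        _ = fa := step.symm
  obtain ⟨hsij, hijs⟩ := key s e₁ f₁ hf₁ hsJ hinvs hs1 hs2
  obtain ⟨htij, hijt⟩ := key t e₂ f₂ hf₂ htJ hinvt ht1 ht2
  obtain ⟨hd1, hd2, hd3⟩ := hdistr (inv j) s t hst
  simp only [← hj] at hd1 hd2 hd3
  rw [hsij] at hd1
  rw [htij] at hd2
  simp only [hsij, htij] at hd3
  obtain ⟨hE1, hE2, hE3⟩ := hlub e₁ e₂ hee
  have HJE : j * inv j = join e₁ e₂ hee :=
    aux_antisymm inv hinv huniq ((hle _ _).1 (hd3 _ hE1 hE2))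
      ((hle _ _).1 (hE3 _ hd1 hd2))
  obtain ⟨hl1, hl2, hl3⟩ := hdistl (inv j) s t hst
  simp only [← hj] at hl1 hl2 hl3
  rw [hijs] at hl1
  rw [hijt] at hl2
  simp only [hijs, hijt] at hl3
  obtain ⟨hF1, hF2, hF3⟩ := hlub f₁ f₂ hff
  have HJF : inv j * j = join f₁ f₂ hff :=
    aux_antisymm inv hinv huniq ((hle _ _).1 (hl3 _ hF1 hF2))
      ((hle _ _).1 (hF3 _ hl1 hl2))
  exact ⟨j, HJE, HJF⟩
end
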